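/- Let f : ℝ^{m×n} → ℝ be differentiable, let w be a real m×n matrix with all rows nonzero, let v be any real m×n matrix, and set G := P^{r⊥}_w(∇f(w)), e := v − ∇f(w), and d := RN(P^{r⊥}_w(v)). Then ⟨∇f(w), d⟩ ≥ ‖G‖_F − (√m + 1)‖e‖_F. -/

import Mathlib

/-!
Row `i` of `Pperp w` is the orthogonal projection `Pᵢ` onto `(ℝ ∙ wᵢ)ᗮ`, and row `i` of
`d = RN (Pperp w v)` is the normalization of `Pᵢ vᵢ`, a vector of norm `≤ 1` in that subspace.
Since `vᵢ - Pᵢ vᵢ ⊥ Pᵢ vᵢ`, we get `⟪vᵢ, dᵢ⟫ = ‖Pᵢ vᵢ‖`, so Cauchy–Schwarz gives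
`⟪gᵢ, dᵢ⟫ ≥ ‖Pᵢ vᵢ‖ - ‖eᵢ‖` for `g = gradf w` and `e = v - g`. Summing over rows and comparing
the sum of row norms with the Frobenius norm (`‖x‖ ≤ ∑ ‖xᵢ‖ ≤ √m ‖x‖`) gives
`⟪g, d⟫ ≥ ‖Pperp w v‖ - √m ‖e‖`, and `‖Pperp w g‖ ≤ ‖Pperp w v‖ + ‖e‖` because `Pperp w` is
linear and nonexpansive.
-/

open scoped BigOperators RealInnerProductSpace
open Finset MeasureTheory

noncomputable section

/-- The space of real m×n matrices with the Frobenius (Euclidean) norm and inner product. -/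
abbrev Mat (m n : ℕ) := EuclideanSpace ℝ (Fin m × Fin n)

/-- The i-th row of a matrix. -/
def row {m n : ℕ} (x : Mat m n) (i : Fin m) : Fin n → ℝ := fun j => x (i, j)

/-- Euclidean inner product of two rows. -/
def rdot {n : ℕ} (x y : Fin n → ℝ) : ℝ := ∑ j, x j * y j

/-- Euclidean norm of a row. -/
def rnorm {n : ℕ} (x : Fin n → ℝ) : ℝ := Real.sqrt (rdot x x)

/-- Row-wise perpendicular projection: each row of `x` is projected onto the
orthogonal complement of the corresponding row of `w`. -/
def Pperp {m n : ℕ} (w x : Mat m n) : Mat m n :=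
  WithLp.toLp 2 (fun p => x p - (rdot (row x p.1) (row w p.1) / (rnorm (row w p.1)) ^ 2) * w p)

/-- Row-wise normalization, with the convention 0/0 = 0. -/
def RN {m n : ℕ} (x : Mat m n) : Mat m n :=
  WithLp.toLp 2 (fun p => if row x p.1 = 0 then 0 else x p / rnorm (row x p.1))

/-- The (1,2)-norm: sum of Euclidean norms of the rows. -/
def norm12 {m n : ℕ} (x : Mat m n) : ℝ := ∑ i, rnorm (row x i)

/-- The (∞,2)-norm: maximum of Euclidean norms of the rows. -/
def normInf2 {m n : ℕ} (x : Mat m n) : ℝ := ⨆ i, rnorm (row x i)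

lemma NormedSpace.norm_normalize_le_one {V : Type*} [NormedAddCommGroup V] [NormedSpace ℝ V]
    (x : V) : ‖NormedSpace.normalize x‖ ≤ 1 := by
  rcases eq_or_ne x 0 with rfl | hx
  · simp [normalize_zero_eq_zero]
  · exact (NormedSpace.norm_normalize_eq_one_iff.mpr hx).le

namespace Submodule

variable {E : Type*} [NormedAddCommGroup E] [InnerProductSpace ℝ E]
  (K : Submodule ℝ E) [K.HasOrthogonalProjection]

lemma inner_normalize_starProjection (v : E) :
    ⟪v, NormedSpace.normalize (K.starProjection v)⟫ = ‖K.starProjection v‖ := by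
  set u := K.starProjection v
  have hvu : ⟪v, u⟫ = ‖u‖ ^ 2 := by
    have h := K.starProjection_inner_eq_zero v u (K.starProjection_apply_mem v)
    rw [inner_sub_left, real_inner_self_eq_norm_sq] at h
    linarith
  rw [NormedSpace.normalize, real_inner_smul_right, hvu]
  rcases (norm_nonneg u).eq_or_lt with h | h
  · simp [← h]
  · field_simp

theorem norm_starProjection_sub_le_inner_normalize (g v : E) :
    ‖K.starProjection v‖ - ‖v - g‖ ≤ ⟪g, NormedSpace.normalize (K.starProjection v)⟫ := by
  have h : ⟪v - g, NormedSpace.normalize (K.starProjection v)⟫ ≤ ‖v - g‖ := calc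
    _ ≤ ‖v - g‖ * ‖NormedSpace.normalize (K.starProjection v)‖ := real_inner_le_norm _ _
    _ ≤ ‖v - g‖ := mul_le_of_le_one_right (norm_nonneg _) (NormedSpace.norm_normalize_le_one _)
  rw [inner_sub_left, K.inner_normalize_starProjection] at h
  linarith

end Submodule

section Rows

variable {m n : ℕ}

def rowVec (x : Mat m n) (i : Fin m) : EuclideanSpace ℝ (Fin n) := WithLp.toLp 2 (row x i)

lemma rdot_eq_inner (x y : Fin n → ℝ) : rdot x y = ⟪WithLp.toLp 2 x, WithLp.toLp 2 y⟫ := by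
  simp [rdot, PiLp.inner_apply, mul_comm]

lemma rnorm_eq_norm (x : Fin n → ℝ) : rnorm x = ‖WithLp.toLp 2 x‖ := by
  rw [rnorm, rdot_eq_inner, norm_eq_sqrt_real_inner]

lemma rowVec_sub (x y : Mat m n) (i : Fin m) : rowVec (x - y) i = rowVec x i - rowVec y i := rfl

lemma rowVec_Pperp (w x : Mat m n) (i : Fin m) :
    rowVec (Pperp w x) i = (ℝ ∙ rowVec w i)ᗮ.starProjection (rowVec x i) := by
  rw [Submodule.starProjection_orthogonal_val, Submodule.starProjection_singleton]
  ext j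
  simp [rowVec, row, Pperp, rdot_eq_inner, rnorm_eq_norm, real_inner_comm]

lemma rowVec_RN (x : Mat m n) (i : Fin m) :
    rowVec (RN x) i = NormedSpace.normalize (rowVec x i) := by
  ext j
  by_cases h : row x i = 0
  · simp [rowVec, RN, h, row]
  · simp [rowVec, RN, h, NormedSpace.normalize, rnorm_eq_norm, row, div_eq_inv_mul]

lemma inner_eq_sum_inner_rowVec (x y : Mat m n) : ⟪x, y⟫ = ∑ i, ⟪rowVec x i, rowVec y i⟫ := by
  simp [PiLp.inner_apply, Fintype.sum_prod_type, rowVec, row]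

lemma norm_sq_eq_sum_norm_rowVec_sq (x : Mat m n) : ‖x‖ ^ 2 = ∑ i, ‖rowVec x i‖ ^ 2 := by
  simp [EuclideanSpace.norm_sq_eq, Fintype.sum_prod_type, rowVec, row]

lemma norm12_eq_sum_norm_rowVec (x : Mat m n) : norm12 x = ∑ i, ‖rowVec x i‖ := by
  simp [norm12, rnorm_eq_norm, rowVec]

lemma norm_le_norm12 (x : Mat m n) : ‖x‖ ≤ norm12 x := by
  have hnonneg : 0 ≤ norm12 x := by
    rw [norm12_eq_sum_norm_rowVec]; positivity
  rw [← sq_le_sq₀ (norm_nonneg x) hnonneg, norm_sq_eq_sum_norm_rowVec_sq,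
    norm12_eq_sum_norm_rowVec]
  exact sum_sq_le_sq_sum_of_nonneg fun i _ => norm_nonneg _

lemma norm12_le_sqrt_mul_norm (x : Mat m n) : norm12 x ≤ √m * ‖x‖ := by
  rw [← Real.sqrt_sq (norm_nonneg x), ← Real.sqrt_mul (Nat.cast_nonneg m)]
  apply Real.le_sqrt_of_sq_le
  rw [norm_sq_eq_sum_norm_rowVec_sq, norm12_eq_sum_norm_rowVec]
  simpa using sq_sum_le_card_mul_sum_sq (s := univ) (f := fun i => ‖rowVec x i‖)

lemma Pperp_sub (w x y : Mat m n) : Pperp w (x - y) = Pperp w x - Pperp w y := by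
  ext p
  simp only [Pperp, PiLp.sub_apply, rdot, row, sub_mul, sum_sub_distrib]
  ring

lemma norm_Pperp_le (w x : Mat m n) : ‖Pperp w x‖ ≤ ‖x‖ := by
  rw [← sq_le_sq₀ (norm_nonneg _) (norm_nonneg _), norm_sq_eq_sum_norm_rowVec_sq,
    norm_sq_eq_sum_norm_rowVec_sq]
  gcongr with i
  rw [rowVec_Pperp]
  exact Submodule.norm_starProjection_apply_le _ _

lemma norm12_Pperp_sub_le_inner_RN (w g v : Mat m n) :
    norm12 (Pperp w v) - norm12 (v - g) ≤ ⟪g, RN (Pperp w v)⟫ := by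
  simp only [norm12_eq_sum_norm_rowVec, inner_eq_sum_inner_rowVec, ← sum_sub_distrib,
    rowVec_RN, rowVec_Pperp, rowVec_sub]
  refine sum_le_sum fun i _ => ?_
  exact Submodule.norm_starProjection_sub_le_inner_normalize _ _ _

end Rows

theorem projected_inner_lower_bound_frobenius_general {m n : ℕ} (gradf : Mat m n → Mat m n)
    (w : Mat m n) (v : Mat m n) :
    ⟪gradf w, RN (Pperp w v)⟫ ≥
      ‖Pperp w (gradf w)‖ - (Real.sqrt m + 1) * ‖v - gradf w‖ := by
  have hrows := norm12_Pperp_sub_le_inner_RN w (gradf w) v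
  have hPv := norm_le_norm12 (Pperp w v)
  have he := norm12_le_sqrt_mul_norm (v - gradf w)
  have hPg : ‖Pperp w (gradf w)‖ ≤ ‖Pperp w v‖ + ‖v - gradf w‖ := calc
    _ = ‖Pperp w v - Pperp w (v - gradf w)‖ := by rw [Pperp_sub, sub_sub_cancel]
    _ ≤ ‖Pperp w v‖ + ‖Pperp w (v - gradf w)‖ := norm_sub_le _ _
    _ ≤ _ := by gcongr; exact norm_Pperp_le _ _
  linarith

/-- Projected inner-product lower bound in the Frobenius norm. -/
theorem projected_inner_lower_bound_frobenius {m n : ℕ} (f : Mat m n → ℝ)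
    (gradf : Mat m n → Mat m n) (hdiff : ∀ u, HasGradientAt f (gradf u) u)
    (w : Mat m n) (hw : ∀ i, row w i ≠ 0) (v : Mat m n) :
    ⟪gradf w, RN (Pperp w v)⟫ ≥
      ‖Pperp w (gradf w)‖ - (Real.sqrt m + 1) * ‖v - gradf w‖ :=
  projected_inner_lower_bound_frobenius_general gradf w v
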